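/- arXiv:1511.00146 — 8 statements merged into one kernel-verified Lean document; each statement's English description precedes it below -/
import Mathlib

section
/- Let λ_k ∈ S, g ∈ E, β > 0, and let λ₊ ∈ S be a point minimizing λ ↦ ⟨λ, g⟩ + h(λ) + (1/β)·D(λ, λ_k) over S. Assume h is convex on S and differentiable at λ₊, the map λ ↦ D(λ, λ_k) is differentiable at λ₊, and α > 0 satisfies ⟨λ₊ − λ_k, ∇₁D(λ₊, λ_k)⟩ ≥ α·‖λ₊ − λ_k‖². Then, with G := (λ_k − λ₊)/β, one has ⟨g, G⟩ ≥ α·‖G‖² + (1/β)·(h(λ₊) − h(λ_k)). -/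
open scoped RealInnerProductSpace

/-! The first-order optimality condition of `λ₊` on the convex set `S`, tested in the direction
`λ_k − λ₊`, bounds `⟨g, λ_k − λ₊⟩` below by `−h'(λ₊)(λ_k − λ₊) + (1/β)⟨∇₁D, λ₊ − λ_k⟩`. The
subgradient inequality of the convex `h` turns the first term into `h(λ₊) − h(λ_k)`, and the
assumption on `∇₁D` the second into `(α/β)‖λ₊ − λ_k‖²`; dividing by `β` gives the claim. -/

section FirstOrder

variable {E : Type*} [NormedAddCommGroup E] [NormedSpace ℝ E] {S : Set E} {f : E → ℝ}
  {f' : E →L[ℝ] ℝ} {x y : E}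

theorem IsMinOn.hasFDerivAt_apply_sub_nonneg (hmin : IsMinOn f S x) (hS : Convex ℝ S)
    (hx : x ∈ S) (hy : y ∈ S) (hf : HasFDerivAt f f' x) : 0 ≤ f' (y - x) :=
  hmin.localize.hasFDerivWithinAt_nonneg hf.hasFDerivWithinAt
    (sub_mem_posTangentConeAt_of_segment_subset (hS.segment_subset hx hy))

theorem ConvexOn.hasFDerivAt_apply_sub_le (hf : ConvexOn ℝ S f) (hx : x ∈ S) (hy : y ∈ S)
    (hd : HasFDerivAt f f' x) : f' (y - x) ≤ f y - f x := by
  -- the restriction of `f` to the line through `x` and `y` is convex, so its secant slope on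
  -- `[0, 1]` dominates its derivative at `0`
  have hline := hf.comp_affineMap (AffineMap.lineMap x y : ℝ →ᵃ[ℝ] E)
  have hderiv : HasDerivAt (f ∘ AffineMap.lineMap (k := ℝ) x y) (f' (y - x)) 0 := by
    rw [← AffineMap.lineMap_apply_zero x y (k := ℝ)] at hd
    exact hd.comp_hasDerivAt 0 AffineMap.hasDerivAt_lineMap
  simpa [slope_def_field] using
    hline.le_slope_of_hasDerivAt (by simpa) (by simpa) zero_lt_one hderiv

end FirstOrder

section InnerProduct

variable {E : Type*} [NormedAddCommGroup E] [InnerProductSpace ℝ E] [CompleteSpace E]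

theorem IsMinOn.sub_add_mul_inner_gradient_le_inner {S : Set E} {h φ : E → ℝ} {g x y : E}
    {c : ℝ} (hmin : IsMinOn (fun z => ⟪z, g⟫ + h z + c * φ z) S x) (hS : Convex ℝ S) (hx : x ∈ S)
    (hy : y ∈ S) (hconv : ConvexOn ℝ S h) (hh : DifferentiableAt ℝ h x)
    (hφ : DifferentiableAt ℝ φ x) :
    h x - h y + c * ⟪gradient φ x, x - y⟫ ≤ ⟪g, y - x⟫ := by
  have hderiv : HasFDerivAt (fun z => ⟪z, g⟫ + h z + c * φ z)
      (innerSL ℝ g + fderiv ℝ h x + c • InnerProductSpace.toDual ℝ E (gradient φ x)) x := by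
    have hinner : HasFDerivAt (fun z : E => ⟪z, g⟫) (innerSL ℝ g) x := by
      convert (innerSL ℝ g).hasFDerivAt using 1
      ext z
      exact real_inner_comm g z
    exact (hinner.add hh.hasFDerivAt).add (hφ.hasGradientAt.hasFDerivAt.const_mul c)
  have hopt := hmin.hasFDerivAt_apply_sub_nonneg hS hx hy hderiv
  have hsub := hconv.hasFDerivAt_apply_sub_le hx hy hh.hasFDerivAt
  have hswap : ⟪gradient φ x, y - x⟫ = -⟪gradient φ x, x - y⟫ := by
    rw [← inner_neg_right, neg_sub]
  simp only [add_apply, innerSL_apply_apply, smul_apply,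
    InnerProductSpace.toDual_apply_apply, smul_eq_mul, hswap] at hopt
  linarith

end InnerProduct

theorem stmt_0_general {E : Type*} [NormedAddCommGroup E] [InnerProductSpace ℝ E] [CompleteSpace E]
    (S : Set E) (hS : Convex ℝ S)
    (h : E → ℝ) (D : E → E → ℝ)
    (lamk : E) (hlamkS : lamk ∈ S) (g : E) (β : ℝ) (hβ : 0 < β)
    (lamp : E) (hlampS : lamp ∈ S)
    (hmin : ∀ y ∈ S,
      ⟪lamp, g⟫ + h lamp + (1 / β) * D lamp lamk ≤
        ⟪y, g⟫ + h y + (1 / β) * D y lamk)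
    (hconv : ConvexOn ℝ S h) (hdiff : DifferentiableAt ℝ h lamp)
    (hDdiff : DifferentiableAt ℝ (fun x => D x lamk) lamp)
    (α : ℝ)
    (hA6 : ⟪lamp - lamk, gradient (fun x => D x lamk) lamp⟫ ≥ α * ‖lamp - lamk‖ ^ 2) :
    ⟪g, (1 / β) • (lamk - lamp)⟫ ≥
      α * ‖(1 / β) • (lamk - lamp)‖ ^ 2 + (1 / β) * (h lamp - h lamk) := by
  have hmin' : IsMinOn (fun y => ⟪y, g⟫ + h y + (1 / β) * D y lamk) S lamp := hmin
  have hopt := hmin'.sub_add_mul_inner_gradient_le_inner hS hlampS hlamkS hconv hdiff hDdiff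
  rw [real_inner_comm] at hA6
  have hβinv : 0 < 1 / β := by positivity
  rw [real_inner_smul_right, norm_smul, ← norm_neg (lamk - lamp), neg_sub, mul_pow,
    Real.norm_eq_abs, abs_of_pos hβinv]
  nlinarith [mul_le_mul_of_nonneg_left hA6 hβinv.le]

/-- Lemma 1 (one-step optimality bound for the proximal-gradient step):
if `λ₊` minimizes `λ ↦ ⟨λ, g⟩ + h(λ) + (1/β)·D(λ, λ_k)` over the convex set `S`,
`h` is convex on `S` and differentiable at `λ₊`, `D(·, λ_k)` is differentiable at `λ₊`,
and assumption A6 holds with constant `α > 0`, then with `G := (λ_k − λ₊)/β` we have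
`⟨g, G⟩ ≥ α‖G‖² + (h(λ₊) − h(λ_k))/β`. -/
theorem stmt_0 {E : Type*} [NormedAddCommGroup E] [InnerProductSpace ℝ E] [CompleteSpace E]
    (S : Set E) (hS : Convex ℝ S)
    (h : E → ℝ) (D : E → E → ℝ)
    (lamk : E) (hlamkS : lamk ∈ S) (g : E) (β : ℝ) (hβ : 0 < β)
    (lamp : E) (hlampS : lamp ∈ S)
    (hmin : ∀ y ∈ S,
      ⟪lamp, g⟫ + h lamp + (1 / β) * D lamp lamk ≤
        ⟪y, g⟫ + h y + (1 / β) * D y lamk)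
    (hconv : ConvexOn ℝ S h) (hdiff : DifferentiableAt ℝ h lamp)
    (hDdiff : DifferentiableAt ℝ (fun x => D x lamk) lamp)
    (α : ℝ) (hα : 0 < α)
    (hA6 : ⟪lamp - lamk, gradient (fun x => D x lamk) lamp⟫ ≥ α * ‖lamp - lamk‖ ^ 2) :
    ⟪g, (1 / β) • (lamk - lamp)⟫ ≥
      α * ‖(1 / β) • (lamk - lamp)‖ ^ 2 + (1 / β) * (h lamp - h lamk) :=
  stmt_0_general S hS h D lamk hlamkS g β hβ lamp hlampS hmin hconv hdiff hDdiff α hA6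
end

section
/- Let f : E → ℝ be differentiable with L-Lipschitz gradient (L > 0). Let λ_k ∈ S, β > 0, and let λ₊ ∈ S minimize λ ↦ ⟨λ, ∇f(λ_k)⟩ + h(λ) + (1/β)·D(λ, λ_k) over S. Assume h is convex on S and differentiable at λ₊, the map λ ↦ D(λ, λ_k) is differentiable at λ₊, and α > 0 satisfies ⟨λ₊ − λ_k, ∇₁D(λ₊, λ_k)⟩ ≥ α·‖λ₊ − λ_k‖². Then, with G := (λ_k − λ₊)/β, one has f(λ₊) + h(λ₊) ≤ f(λ_k) + h(λ_k) − (α·β − (L/2)·β²)·‖G‖²; equivalently, the lower bound 𝓛 := −(f + h) satisfies 𝓛(λ₊) − 𝓛(λ_k) ≥ (α·β − (L/2)·β²)·‖G‖². -/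
open scoped RealInnerProductSpace
open Set InnerProductSpace

/-!
Minimality of `λ₊` along the segment towards `λ_k`, with `h` replaced by its chord, gives the
first-order condition `0 ≤ ⟪∇f(λ_k), λ_k - λ₊⟫ + (1/β)⟪∇₁D(λ₊, λ_k), λ_k - λ₊⟫ + h(λ_k) - h(λ₊)`.
Since `⟪∇₁D(λ₊, λ_k), λ_k - λ₊⟫ ≤ -α‖λ_k - λ₊‖²`, this becomes
`(α/β)‖λ_k - λ₊‖² ≤ ⟪∇f(λ_k), λ_k - λ₊⟫ + h(λ_k) - h(λ₊)`, and adding the descent lemma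
`f(λ₊) ≤ f(λ_k) - ⟪∇f(λ_k), λ_k - λ₊⟫ + (L/2)‖λ_k - λ₊‖²` gives the claim.
-/

section NormedSpace

variable {E : Type*} [NormedAddCommGroup E] [NormedSpace ℝ E]

theorem HasFDerivAt.hasDerivAt_comp_add_smul {A : E → ℝ} {A' : E →L[ℝ] ℝ} {p v : E} {t : ℝ}
    (hA : HasFDerivAt A A' (p + t • v)) : HasDerivAt (fun s : ℝ => A (p + s • v)) (A' v) t := by
  have hline : HasDerivAt (fun s : ℝ => p + s • v) v t := by
    simpa using ((hasDerivAt_id t).smul_const v).const_add p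
  exact hA.comp_hasDerivAt t hline

/-- Replacing `h` by its chord on `[x, y]` reduces this to Fermat's rule on `[0, 1]`. -/
theorem IsMinOn.hasFDerivAt_add_convexOn_nonneg {S : Set E} (hS : Convex ℝ S) {A h : E → ℝ}
    {A' : E →L[ℝ] ℝ} {x y : E} (hx : x ∈ S) (hy : y ∈ S) (hA : HasFDerivAt A A' x)
    (hh : ConvexOn ℝ S h) (hmin : IsMinOn (fun z => A z + h z) S x) :
    0 ≤ A' (y - x) + (h y - h x) := by
  set φ : ℝ → ℝ := fun t => A (x + t • (y - x)) + t * (h y - h x)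
  have hφ : HasDerivAt φ (A' (y - x) + (h y - h x)) 0 := by
    have hA0 : HasFDerivAt A A' (x + (0 : ℝ) • (y - x)) := by simpa using hA
    exact hA0.hasDerivAt_comp_add_smul.add (hasDerivAt_mul_const _)
  have hφmin : IsMinOn φ (Icc 0 1) 0 := by
    refine isMinOn_iff.2 fun t ⟨ht₀, ht₁⟩ => ?_
    have hchord : h (x + t • (y - x)) ≤ h x + t * (h y - h x) := by
      have := hh.2 hx hy (sub_nonneg.2 ht₁) ht₀ (sub_add_cancel 1 t)
      rw [smul_eq_mul, smul_eq_mul] at this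
      rw [show x + t • (y - x) = (1 - t) • x + t • y by module]
      linarith
    have := isMinOn_iff.1 hmin _ (hS.add_smul_sub_mem hx hy ⟨ht₀, ht₁⟩)
    simp only [φ, zero_smul, add_zero, zero_mul]
    linarith
  have hcone : (1 : ℝ) ∈ posTangentConeAt (Icc 0 1) 0 :=
    mem_posTangentConeAt_of_segment_subset (by simp [segment_eq_Icc])
  simpa using hφmin.localize.hasFDerivWithinAt_nonneg hφ.hasFDerivAt.hasFDerivWithinAt hcone

end NormedSpace

section InnerProductSpace

variable {E : Type*} [NormedAddCommGroup E] [InnerProductSpace ℝ E] [CompleteSpace E]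

theorem image_le_add_inner_gradient_add_of_lipschitz_gradient {f : E → ℝ} {L : ℝ}
    (hf : Differentiable ℝ f) (hlip : ∀ x y : E, ‖gradient f x - gradient f y‖ ≤ L * ‖x - y‖)
    (x y : E) : f y ≤ f x + ⟪gradient f x, y - x⟫ + L / 2 * ‖y - x‖ ^ 2 := by
  set v := y - x
  have hφ : ∀ t : ℝ, HasDerivAt (fun s : ℝ => f (x + s • v) - s * ⟪gradient f x, v⟫)
      (⟪gradient f (x + t • v), v⟫ - ⟪gradient f x, v⟫) t := fun t =>
    (hf _).hasGradientAt.hasFDerivAt.hasDerivAt_comp_add_smul.sub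
      (hasDerivAt_mul_const _)
  have hB : ∀ t : ℝ, HasDerivAt (fun s : ℝ => f x + L / 2 * s ^ 2 * ‖v‖ ^ 2) (L * t * ‖v‖ ^ 2) t :=
    fun t => by
      refine (((hasDerivAt_pow 2 t).const_mul (L / 2)).mul_const (‖v‖ ^ 2)).const_add (f x)
        |>.congr_deriv ?_
      push_cast
      ring
  have hslope : ∀ t ∈ Ico (0 : ℝ) 1,
      ⟪gradient f (x + t • v), v⟫ - ⟪gradient f x, v⟫ ≤ L * t * ‖v‖ ^ 2 := by
    rintro t ⟨ht₀, -⟩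
    calc ⟪gradient f (x + t • v), v⟫ - ⟪gradient f x, v⟫
        = ⟪gradient f (x + t • v) - gradient f x, v⟫ := (inner_sub_left _ _ _).symm
      _ ≤ ‖gradient f (x + t • v) - gradient f x‖ * ‖v‖ := real_inner_le_norm _ _
      _ ≤ L * ‖(x + t • v) - x‖ * ‖v‖ := by gcongr; exact hlip _ _
      _ = L * t * ‖v‖ ^ 2 := by
        rw [add_sub_cancel_left, norm_smul, Real.norm_of_nonneg ht₀]; ring
  have := image_le_of_deriv_right_le_deriv_boundary
    (fun t _ => (hφ t).continuousAt.continuousWithinAt) (fun t _ => (hφ t).hasDerivWithinAt)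
    (by simp) (fun t _ => (hB t).continuousAt.continuousWithinAt)
    (fun t _ => (hB t).hasDerivWithinAt) hslope (right_mem_Icc.2 zero_le_one)
  simp only [one_smul, one_mul, one_pow, v, add_sub_cancel] at this
  linarith

theorem proxStep_first_order_optimality {S : Set E} (hS : Convex ℝ S) {h D : E → ℝ} {g x y : E}
    {c : ℝ} (hx : x ∈ S) (hy : y ∈ S) (hD : DifferentiableAt ℝ D x) (hh : ConvexOn ℝ S h)
    (hmin : ∀ z ∈ S, ⟪x, g⟫ + h x + c * D x ≤ ⟪z, g⟫ + h z + c * D z) :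
    0 ≤ ⟪g, y - x⟫ + c * ⟪gradient D x, y - x⟫ + (h y - h x) := by
  have hlin : HasFDerivAt (fun z : E => ⟪z, g⟫) (toDual ℝ E g) x := by
    rw [show (fun z : E => ⟪z, g⟫) = toDual ℝ E g from funext fun z => real_inner_comm g z]
    exact (toDual ℝ E g).hasFDerivAt
  have := IsMinOn.hasFDerivAt_add_convexOn_nonneg hS hx hy
    (hlin.add (hD.hasGradientAt.hasFDerivAt.const_mul c)) hh
    (isMinOn_iff.2 fun z hz => by simp only [Pi.add_apply]; linarith [hmin z hz])
  simpa only [add_apply, smul_apply, toDual_apply_apply, smul_eq_mul] using this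

end InnerProductSpace

theorem stmt_1_general {E : Type*} [NormedAddCommGroup E] [InnerProductSpace ℝ E] [CompleteSpace E]
    (S : Set E) (hS : Convex ℝ S)
    (h : E → ℝ) (D : E → E → ℝ)
    (f : E → ℝ) (L : ℝ)
    (hf : Differentiable ℝ f)
    (hlip : ∀ x y : E, ‖gradient f x - gradient f y‖ ≤ L * ‖x - y‖)
    (lamk : E) (hlamkS : lamk ∈ S) (β : ℝ) (hβ : 0 < β)
    (lamp : E) (hlampS : lamp ∈ S)
    (hmin : ∀ y ∈ S,
      ⟪lamp, gradient f lamk⟫ + h lamp + (1 / β) * D lamp lamk ≤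
        ⟪y, gradient f lamk⟫ + h y + (1 / β) * D y lamk)
    (hconv : ConvexOn ℝ S h)
    (hDdiff : DifferentiableAt ℝ (fun x => D x lamk) lamp)
    (α : ℝ)
    (hA6 : ⟪lamp - lamk, gradient (fun x => D x lamk) lamp⟫ ≥ α * ‖lamp - lamk‖ ^ 2) :
    f lamp + h lamp ≤ f lamk + h lamk -
      (α * β - (L / 2) * β ^ 2) * ‖(1 / β) • (lamk - lamp)‖ ^ 2 := by
  have hopt := proxStep_first_order_optimality (D := fun x => D x lamk) hS hlampS hlamkS hDdiff
    hconv hmin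
  have hdesc := image_le_add_inner_gradient_add_of_lipschitz_gradient hf hlip lamk lamp
  set v := lamk - lamp
  have hpv : lamp - lamk = -v := (neg_sub _ _).symm
  rw [hpv, norm_neg, inner_neg_left, real_inner_comm] at hA6
  rw [hpv, norm_neg, inner_neg_right] at hdesc
  have hgap : α / β * ‖v‖ ^ 2 ≤ ⟪gradient f lamk, v⟫ + (h lamk - h lamp) := by
    have := mul_le_mul_of_nonneg_left hA6 (one_div_pos.2 hβ).le
    rw [mul_neg] at this
    linarith [show α / β * ‖v‖ ^ 2 = 1 / β * (α * ‖v‖ ^ 2) by ring]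
  have hcoef : (α * β - L / 2 * β ^ 2) * ‖(1 / β) • v‖ ^ 2 = α / β * ‖v‖ ^ 2 - L / 2 * ‖v‖ ^ 2 := by
    rw [norm_smul, mul_pow, Real.norm_of_nonneg (by positivity)]
    field_simp
  rw [hcoef]
  linarith

/-- One-step descent inequality for the deterministic proximal-gradient step:
if `f` has `L`-Lipschitz gradient, `λ₊` minimizes
`λ ↦ ⟨λ, ∇f(λ_k)⟩ + h(λ) + (1/β)·D(λ, λ_k)` over the convex set `S`,
`h` is convex on `S` and differentiable at `λ₊`, `D(·, λ_k)` is differentiable at `λ₊`,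
and assumption A6 holds with constant `α > 0`, then with `G := (λ_k − λ₊)/β` we have
`f(λ₊) + h(λ₊) ≤ f(λ_k) + h(λ_k) − (αβ − (L/2)β²)·‖G‖²`. -/
theorem stmt_1 {E : Type*} [NormedAddCommGroup E] [InnerProductSpace ℝ E] [CompleteSpace E]
    (S : Set E) (hS : Convex ℝ S)
    (h : E → ℝ) (D : E → E → ℝ)
    (f : E → ℝ) (L : ℝ) (hL : 0 < L)
    (hf : Differentiable ℝ f)
    (hlip : ∀ x y : E, ‖gradient f x - gradient f y‖ ≤ L * ‖x - y‖)
    (lamk : E) (hlamkS : lamk ∈ S) (β : ℝ) (hβ : 0 < β)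
    (lamp : E) (hlampS : lamp ∈ S)
    (hmin : ∀ y ∈ S,
      ⟪lamp, gradient f lamk⟫ + h lamp + (1 / β) * D lamp lamk ≤
        ⟪y, gradient f lamk⟫ + h y + (1 / β) * D y lamk)
    (hconv : ConvexOn ℝ S h) (hdiff : DifferentiableAt ℝ h lamp)
    (hDdiff : DifferentiableAt ℝ (fun x => D x lamk) lamp)
    (α : ℝ) (hα : 0 < α)
    (hA6 : ⟪lamp - lamk, gradient (fun x => D x lamk) lamp⟫ ≥ α * ‖lamp - lamk‖ ^ 2) :
    f lamp + h lamp ≤ f lamk + h lamk -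
      (α * β - (L / 2) * β ^ 2) * ‖(1 / β) • (lamk - lamp)‖ ^ 2 :=
  stmt_1_general S hS h D f L hf hlip lamk hlamkS β hβ lamp hlampS hmin hconv hDdiff α hA6
end

section
/- (Convergence of stochastic proximal-gradient variational inference with varying step sizes.) Let E be a finite-dimensional real inner product space with its Borel σ-algebra, S ⊆ E convex, and (Ω, P) a probability space. Let f : E → ℝ be differentiable with L-Lipschitz gradient (L > 0), h : E → ℝ convex on S, α > 0, c > 1/(2α), α* := α − 1/(2c), σ ≥ 0, t ≥ 1, and let β₀, …, β_{t−1} ∈ ℝ and M₀, …, M_{t−1} > 0 satisfy 0 < β_k ≤ 2α*/L for all k < t, with β_k < 2α*/L for at least one k < t. Let λ₀ ∈ S be fixed, and let λ₁, …, λ_t : Ω → E and g₀, …, g_{t−1} : Ω → E be measurable maps such that for P-almost every ω and every k < t: λ_{k+1}(ω) ∈ S minimizes λ ↦ ⟨λ, g_k(ω)⟩ + h(λ) + (1/β_k)·D(λ, λ_k(ω)) over S, h is differentiable at λ_{k+1}(ω), the map λ ↦ D(λ, λ_k(ω)) is differentiable at λ_{k+1}(ω), and ⟨λ_{k+1}(ω)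 − λ_k(ω), ∇₁D(λ_{k+1}(ω), λ_k(ω))⟩ ≥ α·‖λ_{k+1}(ω) − λ_k(ω)‖². Set δ_k := g_k − ∇f(λ_k) and G_k := (λ_k − λ_{k+1})/β_k, and assume ‖δ_k‖² and ‖G_k‖² are integrable with E[‖δ_k‖²] ≤ σ²/M_k for every k < t. Suppose 𝓛* ∈ ℝ satisfies −(f(λ) + h(λ)) ≤ 𝓛* for all λ ∈ S, and set C₀ := 𝓛* + f(λ₀) + h(λ₀). Then Σ_{k=0}^{t−1} (α*·β_k − (L/2)·β_k²)·E[‖G_k‖²] ≤ C₀ + (c·σ²/2)·Σ_{k=0}^{t−1} β_k/M_k. -/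
/-!
Each proximal step decreases `F = f + h` up to the gradient noise: the first-order optimality
of `λ_{k+1}`, tested against the old iterate `λ_k`, combines with the angle condition on `D`,
the descent lemma for the `L`-smooth `f` and Young's inequality `⟨δ, v⟩ ≤ cβ‖δ‖²/2 + ‖v‖²/(2cβ)`
into `(α*β_k − Lβ_k²/2)‖G_k‖² ≤ F(λ_k) − F(λ_{k+1}) + (cβ_k/2)‖δ_k‖²`. Summing telescopes,
`−F(λ_t) ≤ 𝓛*` bounds the remainder, and taking expectations gives the claim.
-/

open scoped RealInnerProductSpace
open MeasureTheory

theorem ConvexOn.nonneg_add_fderiv_of_isMinOn_add {E : Type*} [NormedAddCommGroup E]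
    [NormedSpace ℝ E] {S : Set E} {h φ : E → ℝ} {φ' : E →L[ℝ] ℝ} {x z : E}
    (hh : ConvexOn ℝ S h) (hmin : IsMinOn (h + φ) S z) (hφ : HasFDerivAt φ φ' z)
    (hx : x ∈ S) (hz : z ∈ S) :
    0 ≤ h x - h z + φ' (x - z) := by
  -- Replacing `h` by its chord on `[z, x]` keeps `0` a minimiser and makes the function
  -- differentiable at `0` without any smoothness of `h`.
  set ψ : ℝ → ℝ := fun τ => (1 - τ) * h z + τ * h x + φ (z + τ • (x - z))
  have hseg : ∀ τ : ℝ, z + τ • (x - z) = (1 - τ) • z + τ • x := by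
    intro τ
    rw [smul_sub, sub_smul, one_smul]; abel
  have hψmin : IsLocalMinOn ψ (Set.Icc 0 1) 0 := by
    refine IsMinOn.localize fun τ hτ => ?_
    have hmem : z + τ • (x - z) ∈ S := by
      rw [hseg τ]; exact hh.1 hz hx (by linarith [hτ.2]) hτ.1 (by ring)
    have hchord := hh.2 hz hx (by linarith [hτ.2] : 0 ≤ 1 - τ) hτ.1 (by ring)
    rw [← hseg τ, smul_eq_mul, smul_eq_mul] at hchord
    have := hmin hmem
    simp only [Set.mem_ofPred_eq, Pi.add_apply] at this
    simp only [ψ, Set.mem_ofPred_eq, zero_smul, add_zero, sub_zero, one_mul, zero_mul]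
    linarith
  have hψ : HasDerivAt ψ (h x - h z + φ' (x - z)) 0 := by
    have hline : HasDerivAt (fun τ : ℝ => z + τ • (x - z)) (x - z) 0 := by
      simpa using ((hasDerivAt_id (0 : ℝ)).smul_const (x - z)).const_add z
    have hφ0 : HasFDerivAt φ φ' (z + (0 : ℝ) • (x - z)) := by simpa using hφ
    have hφline := hφ0.comp_hasDerivAt 0 hline
    have hchord : HasDerivAt (fun τ : ℝ => (1 - τ) * h z + τ * h x) (h x - h z) 0 :=
      ((((hasDerivAt_id' 0).const_sub 1).mul_const (h z)).add
        ((hasDerivAt_id' 0).mul_const (h x))).congr_deriv (by ring)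
    exact hchord.add hφline
  have hcone : (1 : ℝ) ∈ posTangentConeAt (Set.Icc (0 : ℝ) 1) 0 :=
    mem_posTangentConeAt_of_segment_subset (by simp [segment_eq_Icc])
  simpa using hψmin.hasFDerivWithinAt_nonneg hψ.hasFDerivAt.hasFDerivWithinAt hcone

theorem le_add_inner_gradient_add_of_lipschitz_gradient {E : Type*} [NormedAddCommGroup E]
    [InnerProductSpace ℝ E] [CompleteSpace E] {f : E → ℝ} {L : ℝ} (hf : Differentiable ℝ f)
    (hlip : ∀ x y : E, ‖gradient f x - gradient f y‖ ≤ L * ‖x - y‖) (x y : E) :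
    f y ≤ f x + ⟪gradient f x, y - x⟫ + L / 2 * ‖y - x‖ ^ 2 := by
  set v := y - x
  set ψ : ℝ → ℝ := fun τ => f (x + τ • v) - τ * ⟪gradient f x, v⟫ - L / 2 * τ ^ 2 * ‖v‖ ^ 2
  have hline :
      ∀ τ : ℝ, HasDerivAt (fun τ : ℝ => f (x + τ • v)) ⟪gradient f (x + τ • v), v⟫ τ := by
    intro τ
    have hcurve : HasDerivAt (fun τ : ℝ => x + τ • v) v τ := by
      simpa using ((hasDerivAt_id τ).smul_const v).const_add x
    have := (hf (x + τ • v)).hasGradientAt.hasFDerivAt.comp_hasDerivAt τ hcurve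
    rwa [InnerProductSpace.toDual_apply_apply] at this
  have hψ : ∀ τ : ℝ, HasDerivAt ψ
      (⟪gradient f (x + τ • v), v⟫ - ⟪gradient f x, v⟫ - L * τ * ‖v‖ ^ 2) τ := by
    intro τ
    exact (((hline τ).sub ((hasDerivAt_id' τ).mul_const ⟪gradient f x, v⟫)).sub
      (((hasDerivAt_pow 2 τ).const_mul (L / 2)).mul_const (‖v‖ ^ 2))).congr_deriv (by ring)
  have hψ' : ∀ τ ∈ interior (Set.Ici (0 : ℝ)),
      ⟪gradient f (x + τ • v), v⟫ - ⟪gradient f x, v⟫ - L * τ * ‖v‖ ^ 2 ≤ 0 := by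
    intro τ hτ
    rw [interior_Ici, Set.mem_Ioi] at hτ
    have hgrad := hlip (x + τ • v) x
    rw [add_sub_cancel_left, norm_smul, Real.norm_of_nonneg hτ.le] at hgrad
    rw [sub_nonpos]
    calc ⟪gradient f (x + τ • v), v⟫ - ⟪gradient f x, v⟫
        = ⟪gradient f (x + τ • v) - gradient f x, v⟫ := (inner_sub_left _ _ _).symm
      _ ≤ ‖gradient f (x + τ • v) - gradient f x‖ * ‖v‖ := real_inner_le_norm _ _
      _ ≤ L * (τ * ‖v‖) * ‖v‖ := by gcongr
      _ = L * τ * ‖v‖ ^ 2 := by ring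
  have hanti := antitoneOn_of_hasDerivWithinAt_nonpos (convex_Ici 0)
    (fun τ _ => (hψ τ).continuousAt.continuousWithinAt)
    (fun τ _ => (hψ τ).hasDerivWithinAt) hψ'
  have := hanti (Set.mem_Ici.2 le_rfl) (Set.mem_Ici.2 zero_le_one) zero_le_one
  simp only [ψ, v, one_smul, zero_smul, add_zero, add_sub_cancel] at this
  linarith

theorem real_inner_le_mul_norm_sq_add_inv_mul_norm_sq {E : Type*} [NormedAddCommGroup E]
    [InnerProductSpace ℝ E] {ε : ℝ} (hε : 0 < ε) (u v : E) :
    ⟪u, v⟫ ≤ ε / 2 * ‖u‖ ^ 2 + 1 / (2 * ε) * ‖v‖ ^ 2 := by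
  have hsq : 0 ≤ (ε * ‖u‖ - ‖v‖) ^ 2 / (2 * ε) := by positivity
  have hexpand : (ε * ‖u‖ - ‖v‖) ^ 2 / (2 * ε) =
      ε / 2 * ‖u‖ ^ 2 + 1 / (2 * ε) * ‖v‖ ^ 2 - ‖u‖ * ‖v‖ := by
    field_simp; ring
  linarith [real_inner_le_norm u v]

theorem prox_step_sufficient_decrease {E : Type*} [NormedAddCommGroup E] [InnerProductSpace ℝ E]
    [CompleteSpace E] {S : Set E} {f h Dz : E → ℝ} {L α c β : ℝ}
    (hh : ConvexOn ℝ S h) (hc : 0 < c) (hβ : 0 < β) {x z g : E} (hx : x ∈ S) (hz : z ∈ S)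
    (hmin : ∀ y ∈ S, ⟪z, g⟫ + h z + (1 / β) * Dz z ≤ ⟪y, g⟫ + h y + (1 / β) * Dz y)
    (hD : DifferentiableAt ℝ Dz z)
    (hangle : α * ‖z - x‖ ^ 2 ≤ ⟪z - x, gradient Dz z⟫)
    (hdescent : f z ≤ f x + ⟪gradient f x, z - x⟫ + L / 2 * ‖z - x‖ ^ 2) :
    ((α - 1 / (2 * c)) * β - (L / 2) * β ^ 2) * ‖(1 / β) • (x - z)‖ ^ 2 ≤
      (f x + h x) - (f z + h z) + (c * β / 2) * ‖g - gradient f x‖ ^ 2 := by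
  have hφ : HasFDerivAt (fun y => ⟪y, g⟫ + (1 / β) * Dz y)
      (innerSL ℝ g + (1 / β) • InnerProductSpace.toDual ℝ E (gradient Dz z)) z := by
    have hinner : HasFDerivAt (fun y => ⟪y, g⟫) (innerSL ℝ g) z := by
      have hfun : ⇑(innerSL ℝ g) = fun y => ⟪y, g⟫ :=
        funext fun y => (innerSL_apply_apply ℝ g y).trans (real_inner_comm y g)
      exact hfun ▸ (innerSL ℝ g).hasFDerivAt
    exact hinner.add (hD.hasGradientAt.hasFDerivAt.const_mul (1 / β))
  have hopt := hh.nonneg_add_fderiv_of_isMinOn_add (φ := fun y => ⟪y, g⟫ + (1 / β) * Dz y)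
    (fun y hy => by simp only [Set.mem_ofPred_eq, Pi.add_apply]; linarith [hmin y hy]) hφ hx hz
  simp only [add_apply, smul_apply, innerSL_apply_apply,
    InnerProductSpace.toDual_apply_apply, smul_eq_mul] at hopt
  have hangle' : ⟪gradient Dz z, x - z⟫ ≤ -(α * ‖x - z‖ ^ 2) := by
    rw [← neg_sub z x, inner_neg_right, real_inner_comm, norm_neg]; linarith
  have hyoung := real_inner_le_mul_norm_sq_add_inv_mul_norm_sq (mul_pos hc hβ)
    (g - gradient f x) (x - z)
  rw [inner_sub_left] at hyoung
  rw [← neg_sub x z, inner_neg_right, norm_neg] at hdescent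
  have hG : ((α - 1 / (2 * c)) * β - (L / 2) * β ^ 2) * ‖(1 / β) • (x - z)‖ ^ 2 =
      (α / β - 1 / (2 * (c * β)) - L / 2) * ‖x - z‖ ^ 2 := by
    rw [norm_smul, mul_pow, Real.norm_of_nonneg (by positivity)]
    field_simp
  have hangleβ : 1 / β * ⟪gradient Dz z, x - z⟫ ≤ -(α / β * ‖x - z‖ ^ 2) := by
    calc 1 / β * ⟪gradient Dz z, x - z⟫ ≤ 1 / β * -(α * ‖x - z‖ ^ 2) := by gcongr
      _ = -(α / β * ‖x - z‖ ^ 2) := by ring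
  rw [hG]
  linarith

theorem sum_prox_steps_le {E : Type*} [NormedAddCommGroup E] [InnerProductSpace ℝ E]
    [CompleteSpace E] {S : Set E} {f h : E → ℝ} {D : E → E → ℝ} {L α c Lstar : ℝ}
    {β : ℕ → ℝ} {t : ℕ} (hf : Differentiable ℝ f)
    (hlip : ∀ x y : E, ‖gradient f x - gradient f y‖ ≤ L * ‖x - y‖) (hh : ConvexOn ℝ S h)
    (hc : 0 < c) (hβ : ∀ k < t, 0 < β k) (x g : ℕ → E) (hx0 : x 0 ∈ S)
    (hxS : ∀ k < t, x (k + 1) ∈ S)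
    (hmin : ∀ k < t, ∀ y ∈ S, ⟪x (k + 1), g k⟫ + h (x (k + 1)) +
        (1 / β k) * D (x (k + 1)) (x k) ≤ ⟪y, g k⟫ + h y + (1 / β k) * D y (x k))
    (hD : ∀ k < t, DifferentiableAt ℝ (fun y => D y (x k)) (x (k + 1)))
    (hangle : ∀ k < t, α * ‖x (k + 1) - x k‖ ^ 2 ≤
        ⟪x (k + 1) - x k, gradient (fun y => D y (x k)) (x (k + 1))⟫)
    (hLstar : ∀ y ∈ S, -(f y + h y) ≤ Lstar) :
    ∑ k ∈ Finset.range t, ((α - 1 / (2 * c)) * β k - (L / 2) * β k ^ 2) *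
        ‖(1 / β k) • (x k - x (k + 1))‖ ^ 2 ≤
      (Lstar + f (x 0) + h (x 0)) +
        ∑ k ∈ Finset.range t, (c * β k / 2) * ‖g k - gradient f (x k)‖ ^ 2 := by
  have hmem : ∀ k ≤ t, x k ∈ S := by
    rintro (_ | k) hk
    exacts [hx0, hxS k (by omega)]
  have hstep := fun k (hk : k ∈ Finset.range t) =>
    have hk := Finset.mem_range.1 hk
    prox_step_sufficient_decrease hh hc (hβ k hk) (hmem k hk.le) (hxS k hk) (hmin k hk)
      (hD k hk) (hangle k hk)
      (le_add_inner_gradient_add_of_lipschitz_gradient hf hlip (x k) (x (k + 1)))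
  have htelescope := Finset.sum_le_sum hstep
  rw [Finset.sum_add_distrib, Finset.sum_range_sub' (fun k => f (x k) + h (x k))] at htelescope
  linarith [hLstar _ (hmem t le_rfl)]

theorem sum_mul_integral_le_of_ae_le {ι Ω : Type*} [MeasurableSpace Ω] {P : Measure Ω}
    [IsProbabilityMeasure P] (s : Finset ι) {a b : ι → ℝ} {X Y : ι → Ω → ℝ} {C : ℝ}
    (hX : ∀ k ∈ s, Integrable (X k) P) (hY : ∀ k ∈ s, Integrable (Y k) P)
    (hle : ∀ᵐ ω ∂P, ∑ k ∈ s, a k * X k ω ≤ C + ∑ k ∈ s, b k * Y k ω) :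
    ∑ k ∈ s, a k * ∫ ω, X k ω ∂P ≤ C + ∑ k ∈ s, b k * ∫ ω, Y k ω ∂P := by
  have hXs : ∀ k ∈ s, Integrable (fun ω => a k * X k ω) P := fun k hk => (hX k hk).const_mul _
  have hYs : ∀ k ∈ s, Integrable (fun ω => b k * Y k ω) P := fun k hk => (hY k hk).const_mul _
  calc ∑ k ∈ s, a k * ∫ ω, X k ω ∂P = ∫ ω, ∑ k ∈ s, a k * X k ω ∂P := by
        rw [integral_finsetSum _ hXs]; simp only [integral_const_mul]
    _ ≤ ∫ ω, C + ∑ k ∈ s, b k * Y k ω ∂P :=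
        integral_mono_ae (integrable_finsetSum _ hXs)
          ((integrable_const C).add (integrable_finsetSum _ hYs)) hle
    _ = C + ∑ k ∈ s, b k * ∫ ω, Y k ω ∂P := by
        rw [integral_add (integrable_const C) (integrable_finsetSum _ hYs),
          integral_finsetSum _ hYs]
        simp only [integral_const, probReal_univ, one_smul, integral_const_mul]

theorem stmt_5_general {E : Type*} [NormedAddCommGroup E] [InnerProductSpace ℝ E]
    [FiniteDimensional ℝ E]
    {Ω : Type*} [MeasurableSpace Ω] (P : Measure Ω) [IsProbabilityMeasure P]
    (S : Set E)
    (h : E → ℝ) (D : E → E → ℝ)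
    (f : E → ℝ) (L : ℝ)
    (hf : Differentiable ℝ f)
    (hlip : ∀ x y : E, ‖gradient f x - gradient f y‖ ≤ L * ‖x - y‖)
    (hconv : ConvexOn ℝ S h)
    (α c σ : ℝ) (hα : 0 < α) (hc : 1 / (2 * α) < c)
    (t : ℕ) (β M : ℕ → ℝ)
    (hβpos : ∀ k < t, 0 < β k)
    (lam0 : E) (hlam0S : lam0 ∈ S)
    (lam : ℕ → Ω → E) (g : ℕ → Ω → E)
    (hlam0 : ∀ ω, lam 0 ω = lam0)
    (hae : ∀ᵐ ω ∂P, ∀ k < t,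
      lam (k + 1) ω ∈ S ∧
      (∀ y ∈ S,
        ⟪lam (k + 1) ω, g k ω⟫ + h (lam (k + 1) ω) +
            (1 / β k) * D (lam (k + 1) ω) (lam k ω) ≤
          ⟪y, g k ω⟫ + h y + (1 / β k) * D y (lam k ω)) ∧
      DifferentiableAt ℝ h (lam (k + 1) ω) ∧
      DifferentiableAt ℝ (fun x => D x (lam k ω)) (lam (k + 1) ω) ∧
      ⟪lam (k + 1) ω - lam k ω, gradient (fun x => D x (lam k ω)) (lam (k + 1) ω)⟫ ≥
        α * ‖lam (k + 1) ω - lam k ω‖ ^ 2)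
    (hδint : ∀ k < t, Integrable (fun ω => ‖g k ω - gradient f (lam k ω)‖ ^ 2) P)
    (hGint : ∀ k < t,
      Integrable (fun ω => ‖(1 / β k) • (lam k ω - lam (k + 1) ω)‖ ^ 2) P)
    (hδvar : ∀ k < t, ∫ ω, ‖g k ω - gradient f (lam k ω)‖ ^ 2 ∂P ≤ σ ^ 2 / M k)
    (Lstar : ℝ) (hLstar : ∀ x ∈ S, -(f x + h x) ≤ Lstar) :
    ∑ k ∈ Finset.range t, ((α - 1 / (2 * c)) * β k - (L / 2) * (β k) ^ 2) *
        (∫ ω, ‖(1 / β k) • (lam k ω - lam (k + 1) ω)‖ ^ 2 ∂P) ≤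
      (Lstar + f lam0 + h lam0) +
        (c * σ ^ 2 / 2) * ∑ k ∈ Finset.range t, β k / M k := by
  have hc0 : 0 < c := lt_trans (by positivity) hc
  have hpath : ∀ᵐ ω ∂P,
      ∑ k ∈ Finset.range t, ((α - 1 / (2 * c)) * β k - (L / 2) * (β k) ^ 2) *
          ‖(1 / β k) • (lam k ω - lam (k + 1) ω)‖ ^ 2 ≤
        (Lstar + f lam0 + h lam0) +
          ∑ k ∈ Finset.range t, (c * β k / 2) * ‖g k ω - gradient f (lam k ω)‖ ^ 2 := by
    filter_upwards [hae] with ω hω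
    simpa only [hlam0] using sum_prox_steps_le hf hlip hconv hc0 hβpos (lam · ω) (g · ω)
      (by simpa only [hlam0] using hlam0S) (fun k hk => (hω k hk).1)
      (fun k hk => (hω k hk).2.1) (fun k hk => (hω k hk).2.2.2.1)
      (fun k hk => (hω k hk).2.2.2.2) hLstar
  calc _ ≤ (Lstar + f lam0 + h lam0) + ∑ k ∈ Finset.range t,
          (c * β k / 2) * ∫ ω, ‖g k ω - gradient f (lam k ω)‖ ^ 2 ∂P :=
        sum_mul_integral_le_of_ae_le _ (fun k hk => hGint k (Finset.mem_range.1 hk))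
          (fun k hk => hδint k (Finset.mem_range.1 hk)) hpath
    _ ≤ (Lstar + f lam0 + h lam0) + ∑ k ∈ Finset.range t, (c * β k / 2) * (σ ^ 2 / M k) := by
        gcongr with k hk
        · have := hβpos k (Finset.mem_range.1 hk)
          positivity
        · exact hδvar k (Finset.mem_range.1 hk)
    _ = _ := by
        rw [Finset.mul_sum]
        congr 1
        exact Finset.sum_congr rfl fun k _ => by ring

/-- Convergence of stochastic proximal-gradient variational inference with varying
step sizes: with `α* := α − 1/(2c)`, `G_k := (λ_k − λ_{k+1})/β_k`,
`δ_k := g_k − ∇f(λ_k)`, `E[‖δ_k‖²] ≤ σ²/M_k`, and `C₀ := 𝓛* + f(λ₀) + h(λ₀)`,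
`Σ_{k<t} (α*β_k − (L/2)β_k²)·E[‖G_k‖²] ≤ C₀ + (cσ²/2)·Σ_{k<t} β_k/M_k`. -/
theorem stmt_5 {E : Type*} [NormedAddCommGroup E] [InnerProductSpace ℝ E]
    [FiniteDimensional ℝ E] [MeasurableSpace E] [BorelSpace E]
    {Ω : Type*} [MeasurableSpace Ω] (P : Measure Ω) [IsProbabilityMeasure P]
    (S : Set E) (hS : Convex ℝ S)
    (h : E → ℝ) (D : E → E → ℝ)
    (f : E → ℝ) (L : ℝ) (hL : 0 < L)
    (hf : Differentiable ℝ f)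
    (hlip : ∀ x y : E, ‖gradient f x - gradient f y‖ ≤ L * ‖x - y‖)
    (hconv : ConvexOn ℝ S h)
    (α c σ : ℝ) (hα : 0 < α) (hc : 1 / (2 * α) < c) (hσ : 0 ≤ σ)
    (t : ℕ) (ht : 1 ≤ t) (β M : ℕ → ℝ)
    (hM : ∀ k < t, 0 < M k)
    (hβpos : ∀ k < t, 0 < β k)
    (hβle : ∀ k < t, β k ≤ 2 * (α - 1 / (2 * c)) / L)
    (hstrict : ∃ k < t, β k < 2 * (α - 1 / (2 * c)) / L)
    (lam0 : E) (hlam0S : lam0 ∈ S)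
    (lam : ℕ → Ω → E) (g : ℕ → Ω → E)
    (hlam0 : ∀ ω, lam 0 ω = lam0)
    (hmeas_lam : ∀ k, Measurable (lam k))
    (hmeas_g : ∀ k < t, Measurable (g k))
    (hae : ∀ᵐ ω ∂P, ∀ k < t,
      lam (k + 1) ω ∈ S ∧
      (∀ y ∈ S,
        ⟪lam (k + 1) ω, g k ω⟫ + h (lam (k + 1) ω) +
            (1 / β k) * D (lam (k + 1) ω) (lam k ω) ≤
          ⟪y, g k ω⟫ + h y + (1 / β k) * D y (lam k ω)) ∧
      DifferentiableAt ℝ h (lam (k + 1) ω) ∧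
      DifferentiableAt ℝ (fun x => D x (lam k ω)) (lam (k + 1) ω) ∧
      ⟪lam (k + 1) ω - lam k ω, gradient (fun x => D x (lam k ω)) (lam (k + 1) ω)⟫ ≥
        α * ‖lam (k + 1) ω - lam k ω‖ ^ 2)
    (hδint : ∀ k < t, Integrable (fun ω => ‖g k ω - gradient f (lam k ω)‖ ^ 2) P)
    (hGint : ∀ k < t,
      Integrable (fun ω => ‖(1 / β k) • (lam k ω - lam (k + 1) ω)‖ ^ 2) P)
    (hδvar : ∀ k < t, ∫ ω, ‖g k ω - gradient f (lam k ω)‖ ^ 2 ∂P ≤ σ ^ 2 / M k)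
    (Lstar : ℝ) (hLstar : ∀ x ∈ S, -(f x + h x) ≤ Lstar) :
    ∑ k ∈ Finset.range t, ((α - 1 / (2 * c)) * β k - (L / 2) * (β k) ^ 2) *
        (∫ ω, ‖(1 / β k) • (lam k ω - lam (k + 1) ω)‖ ^ 2 ∂P) ≤
      (Lstar + f lam0 + h lam0) +
        (c * σ ^ 2 / 2) * ∑ k ∈ Finset.range t, β k / M k :=
  stmt_5_general P S h D f L hf hlip hconv α c σ hα hc t β M hβpos lam0 hlam0S lam g hlam0 hae hδint
    hGint hδvar Lstar hLstar
end

section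
/- (Proposition 3: convergence of stochastic proximal-gradient variational inference with fixed step size and batch size.) Let E be a finite-dimensional real inner product space with its Borel σ-algebra, S ⊆ E convex, and (Ω, P) a probability space. Let f : E → ℝ be differentiable with L-Lipschitz gradient (L > 0), h : E → ℝ convex on S, α > 0, c > 1/(2α), α* := α − 1/(2c), σ ≥ 0, M > 0, t ≥ 1, and set β := α*/L. Let λ₀ ∈ S be fixed, and let λ₁, …, λ_t : Ω → E and g₀, …, g_{t−1} : Ω → E be measurable maps such that for P-almost every ω and every k < t: λ_{k+1}(ω) ∈ S minimizes λ ↦ ⟨λ, g_k(ω)⟩ + h(λ) + (1/β)·D(λ, λ_k(ω)) over S, h is differentiable at λ_{k+1}(ω), the map λ ↦ D(λ, λ_k(ω)) is differentiable at λ_{k+1}(ω), and ⟨λ_{k+1}(ω) − λ_k(ω), ∇₁D(λ_{k+1}(ω), λ_k(ω))⟩ ≥ α·‖λ_{k+1}(ω) − λ_k(ω)‖². Set δ_k := g_k − ∇f(λ_k) and G_k := (λ_k − λ_{k+1})/β, and assume ‖δ_k‖² and ‖G_k‖² are integrable with E[‖δ_k‖²] ≤ σ²/M for every k < t. Suppose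 𝓛* ∈ ℝ satisfies −(f(λ) + h(λ)) ≤ 𝓛* for all λ ∈ S, and set C₀ := 𝓛* + f(λ₀) + h(λ₀). Then (1/t)·Σ_{k=0}^{t−1} E[‖G_k‖²] ≤ 2·L·C₀/(α*²·t) + c·σ²/(M·α*). -/
/-!
Each proximal step is compared with its starting point: first-order optimality of the
subproblem against the convex `h`, the curvature bound `⟪λ_{k+1} - λ_k, ∇₁D⟫ ≥ α‖λ_{k+1} - λ_k‖²`,
the descent lemma for the `L`-smooth `f` and Young's inequality `⟪δ, u⟫ ≤ βc/2 ‖δ‖² + ‖u‖²/(2βc)`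
show that `f + h` drops by `(α*/β - L/2)‖λ_{k+1} - λ_k‖² = (L/2)‖λ_{k+1} - λ_k‖²` up to the noise
`βc/2 ‖δ_k‖²`. Telescoping, bounding `f + h` below by `-𝓛*` and taking expectations gives
`(Lβ²/2) Σ E‖G_k‖² ≤ C₀ + (βc/2) t σ²/M`, which is the claim since `Lβ² = α*²/L`.
-/

open scoped RealInnerProductSpace
open MeasureTheory Set

section FirstOrderOptimality

variable {E : Type*} [NormedAddCommGroup E] [NormedSpace ℝ E]

theorem IsMinOn.sub_le_of_hasFDerivAt_of_convexOn {S : Set E} (hS : Convex ℝ S)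
    {φ h : E → ℝ} {φ' : E →L[ℝ] ℝ} {p q : E} (hmin : IsMinOn (fun y => φ y + h y) S p)
    (hφ : HasFDerivAt φ φ' p) (hh : ConvexOn ℝ S h) (hp : p ∈ S) (hq : q ∈ S) :
    h p - h q ≤ φ' (q - p) := by
  -- Along the segment from `p` to `q`, convexity bounds `h` by its chord, and the resulting
  -- majorant of the objective is differentiable and minimal at the endpoint `p`.
  set ψ : ℝ → ℝ := fun s => φ (p + s • (q - p)) + s * (h q - h p)
  have hψ : HasDerivAt ψ (φ' (q - p) + (h q - h p)) 0 := by
    have hline : HasDerivAt (fun s : ℝ => p + s • (q - p)) (q - p) 0 := by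
      simpa using ((hasDerivAt_id (0 : ℝ)).smul_const (q - p)).const_add p
    exact (hφ.comp_hasDerivAt_of_eq 0 hline (by simp)).add
      (by simpa using (hasDerivAt_id (0 : ℝ)).mul_const (h q - h p))
  have hψmin : IsMinOn ψ (Icc 0 1) 0 := by
    refine isMinOn_iff.mpr fun s hs => ?_
    have hchord : h (p + s • (q - p)) ≤ h p + s * (h q - h p) := by
      have hpt : (1 - s) • p + s • q = p + s • (q - p) := by module
      have := hh.2 hp hq (sub_nonneg.2 hs.2) hs.1 (sub_add_cancel 1 s)
      rw [hpt, smul_eq_mul, smul_eq_mul] at this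
      linarith
    have := isMinOn_iff.mp hmin _ (hS.add_smul_sub_mem hp hq hs)
    simp only [ψ, zero_smul, add_zero, zero_mul]
    linarith
  have hone : (1 : ℝ) ∈ posTangentConeAt (Icc 0 1) 0 :=
    mem_posTangentConeAt_of_segment_subset (by simp [segment_eq_Icc])
  have := hψmin.localize.hasFDerivWithinAt_nonneg hψ.hasFDerivAt.hasFDerivWithinAt hone
  simp only [ContinuousLinearMap.toSpanSingleton_apply, one_smul] at this
  linarith

end FirstOrderOptimality

section LipschitzGradient

variable {E : Type*} [NormedAddCommGroup E] [InnerProductSpace ℝ E] [CompleteSpace E]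

theorem HasGradientAt.hasDerivAt_comp_add_smul {f : E → ℝ} {f' x v : E} {s : ℝ}
    (hf : HasGradientAt f f' (x + s • v)) :
    HasDerivAt (fun r : ℝ => f (x + r • v)) ⟪f', v⟫ s := by
  have hline : HasDerivAt (fun r : ℝ => x + r • v) v s := by
    simpa using ((hasDerivAt_id s).smul_const v).const_add x
  simpa [Function.comp_def] using (hasGradientAt_iff_hasFDerivAt.mp hf).comp_hasDerivAt s hline

theorem abs_sub_sub_inner_gradient_le {f : E → ℝ} {L : ℝ} (hf : Differentiable ℝ f)
    (hlip : ∀ x y, ‖gradient f x - gradient f y‖ ≤ L * ‖x - y‖) (x y : E) :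
    |f y - f x - ⟪gradient f x, y - x⟫| ≤ L / 2 * ‖y - x‖ ^ 2 := by
  set v := y - x
  set F : ℝ → ℝ := fun s => f (x + s • v) - f x - s * ⟪gradient f x, v⟫
  have hF : ∀ s, HasDerivAt F ⟪gradient f (x + s • v) - gradient f x, v⟫ s := fun s => by
    rw [inner_sub_left]
    exact (((hf _).hasGradientAt.hasDerivAt_comp_add_smul).sub_const _).sub
      (by simpa using (hasDerivAt_id s).mul_const ⟪gradient f x, v⟫)
  have hB : ∀ s, HasDerivAt (fun s => L / 2 * s ^ 2 * ‖v‖ ^ 2) (L * s * ‖v‖ ^ 2) s := fun s =>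
    (((hasDerivAt_pow 2 s).const_mul (L / 2)).mul_const (‖v‖ ^ 2)).congr_deriv (by ring)
  have hbound : ∀ s ∈ Ico (0 : ℝ) 1,
      ‖⟪gradient f (x + s • v) - gradient f x, v⟫‖ ≤ L * s * ‖v‖ ^ 2 := fun s hs => by
    calc ‖⟪gradient f (x + s • v) - gradient f x, v⟫‖
        ≤ ‖gradient f (x + s • v) - gradient f x‖ * ‖v‖ := norm_inner_le_norm _ _
      _ ≤ L * ‖x + s • v - x‖ * ‖v‖ := by gcongr; exact hlip _ _
      _ = L * s * ‖v‖ ^ 2 := by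
        rw [add_sub_cancel_left, norm_smul, Real.norm_of_nonneg hs.1]; ring
  have := image_norm_le_of_norm_deriv_right_le_deriv_boundary
    (fun s _ => (hF s).continuousAt.continuousWithinAt) (fun s _ => (hF s).hasDerivWithinAt)
    (by simp [F]) hB hbound (right_mem_Icc.2 zero_le_one)
  simpa [F, v] using this

end LipschitzGradient

section ProximalGradient

variable {E : Type*} [NormedAddCommGroup E] [InnerProductSpace ℝ E] [CompleteSpace E]
  {S : Set E} {f h : E → ℝ} {L α β c : ℝ}

theorem proximal_step_descent (hS : Convex ℝ S) (hh : ConvexOn ℝ S h) (hf : Differentiable ℝ f)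
    (hlip : ∀ x y, ‖gradient f x - gradient f y‖ ≤ L * ‖x - y‖) (hβ : 0 < β) (hc : 0 < c)
    {Dq : E → ℝ} {p q g : E} (hp : p ∈ S) (hq : q ∈ S)
    (hmin : ∀ y ∈ S, ⟪p, g⟫ + h p + 1 / β * Dq p ≤ ⟪y, g⟫ + h y + 1 / β * Dq y)
    (hDq : DifferentiableAt ℝ Dq p) (hcurv : α * ‖p - q‖ ^ 2 ≤ ⟪p - q, gradient Dq p⟫) :
    ((α - 1 / (2 * c)) / β - L / 2) * ‖p - q‖ ^ 2 ≤
      (f q + h q) - (f p + h p) + β * c / 2 * ‖g - gradient f q‖ ^ 2 := by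
  have hopt : h p - h q ≤ ⟪g, q - p⟫ + 1 / β * ⟪gradient Dq p, q - p⟫ := by
    have hφ : HasFDerivAt (fun y => ⟪y, g⟫ + 1 / β * Dq y)
        (innerSL ℝ g + (1 / β) • fderiv ℝ Dq p) p := by
      refine HasFDerivAt.add ?_ (hDq.hasFDerivAt.const_mul (1 / β))
      exact (innerSL ℝ g).hasFDerivAt.congr_of_eventuallyEq
        (.of_forall fun y => (real_inner_comm y g).symm)
    have := IsMinOn.sub_le_of_hasFDerivAt_of_convexOn hS
      (isMinOn_iff.mpr fun y hy => by linarith [hmin y hy]) hφ hh hp hq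
    simpa [inner_gradient_left] using this
  have hdesc : f p ≤ f q + ⟪gradient f q, p - q⟫ + L / 2 * ‖p - q‖ ^ 2 := by
    linarith [(le_abs_self _).trans (abs_sub_sub_inner_gradient_le hf hlip q p)]
  -- Young's inequality with weight `β c` absorbs the gradient noise.
  have hyoung : ⟪g - gradient f q, q - p⟫ ≤
      β * c / 2 * ‖g - gradient f q‖ ^ 2 + 1 / (2 * β * c) * ‖p - q‖ ^ 2 := by
    have hβc : 0 < β * c := mul_pos hβ hc
    have h1 := real_inner_le_norm (g - gradient f q) (q - p)
    rw [norm_sub_rev q p] at h1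
    have h2 : ‖g - gradient f q‖ * ‖p - q‖ ≤
        β * c / 2 * ‖g - gradient f q‖ ^ 2 + 1 / (2 * β * c) * ‖p - q‖ ^ 2 := by
      rw [← sub_nonneg]
      have : β * c / 2 * ‖g - gradient f q‖ ^ 2 + 1 / (2 * β * c) * ‖p - q‖ ^ 2
          - ‖g - gradient f q‖ * ‖p - q‖
          = (β * c * ‖g - gradient f q‖ - ‖p - q‖) ^ 2 / (2 * (β * c)) := by
        field_simp
        ring
      rw [this]
      positivity
    linarith
  have hcurv' : 1 / β * ⟪gradient Dq p, q - p⟫ ≤ -(α / β * ‖p - q‖ ^ 2) :=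
    calc 1 / β * ⟪gradient Dq p, q - p⟫ = -(1 / β * ⟪p - q, gradient Dq p⟫) := by
          rw [← neg_sub p q, inner_neg_right, real_inner_comm]; ring
      _ ≤ -(1 / β * (α * ‖p - q‖ ^ 2)) := by gcongr
      _ = -(α / β * ‖p - q‖ ^ 2) := by ring
  have hflip : ⟪gradient f q, p - q⟫ = -⟪gradient f q, q - p⟫ := by
    rw [← inner_neg_right, neg_sub]
  have hcoef : (α - 1 / (2 * c)) / β = α / β - 1 / (2 * β * c) := by field_simp
  rw [inner_sub_left] at hyoung
  rw [hcoef]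
  linarith

theorem sum_proximal_step_descent_le {D : E → E → ℝ} {x g : ℕ → E} {t : ℕ} {Lstar : ℝ}
    (hS : Convex ℝ S) (hh : ConvexOn ℝ S h) (hf : Differentiable ℝ f)
    (hlip : ∀ x y, ‖gradient f x - gradient f y‖ ≤ L * ‖x - y‖) (hβ : 0 < β) (hc : 0 < c)
    (hLstar : ∀ y ∈ S, -(f y + h y) ≤ Lstar) (hx0 : x 0 ∈ S) (hmem : ∀ k < t, x (k + 1) ∈ S)
    (hmin : ∀ k < t, ∀ y ∈ S, ⟪x (k + 1), g k⟫ + h (x (k + 1)) + 1 / β * D (x (k + 1)) (x k) ≤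
      ⟪y, g k⟫ + h y + 1 / β * D y (x k))
    (hD : ∀ k < t, DifferentiableAt ℝ (fun y => D y (x k)) (x (k + 1)))
    (hcurv : ∀ k < t, α * ‖x (k + 1) - x k‖ ^ 2 ≤
      ⟪x (k + 1) - x k, gradient (fun y => D y (x k)) (x (k + 1))⟫) :
    ∑ k ∈ Finset.range t, (((α - 1 / (2 * c)) / β - L / 2) * ‖x (k + 1) - x k‖ ^ 2
        - β * c / 2 * ‖g k - gradient f (x k)‖ ^ 2) ≤
      Lstar + f (x 0) + h (x 0) := by
  have hxS : ∀ k ≤ t, x k ∈ S := fun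
    | 0, _ => hx0
    | k + 1, hk => hmem k hk
  calc _ ≤ ∑ k ∈ Finset.range t, ((f (x k) + h (x k)) - (f (x (k + 1)) + h (x (k + 1)))) := by
        refine Finset.sum_le_sum fun k hk => ?_
        have hk := Finset.mem_range.mp hk
        linarith [proximal_step_descent hS hh hf hlip hβ hc (hmem k hk) (hxS k hk.le) (hmin k hk)
          (hD k hk) (hcurv k hk)]
    _ = (f (x 0) + h (x 0)) - (f (x t) + h (x t)) :=
        Finset.sum_range_sub' (fun k => f (x k) + h (x k)) t
    _ ≤ Lstar + f (x 0) + h (x 0) := by linarith [hLstar _ (hxS t le_rfl)]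

end ProximalGradient

theorem mul_sum_integral_le_of_ae_sum_le {Ω ι : Type*} [MeasurableSpace Ω] {P : Measure Ω}
    [IsProbabilityMeasure P] {s : Finset ι} {X Y : ι → Ω → ℝ} {a b C v : ℝ} (hb : 0 ≤ b)
    (hX : ∀ i ∈ s, Integrable (X i) P) (hY : ∀ i ∈ s, Integrable (Y i) P)
    (hYv : ∀ i ∈ s, ∫ ω, Y i ω ∂P ≤ v) (hle : ∀ᵐ ω ∂P, ∑ i ∈ s, (a * X i ω - b * Y i ω) ≤ C) :
    a * ∑ i ∈ s, ∫ ω, X i ω ∂P ≤ C + b * (s.card * v) := by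
  have hXY : ∀ i ∈ s, Integrable (fun ω => a * X i ω - b * Y i ω) P := fun i hi =>
    ((hX i hi).const_mul a).sub ((hY i hi).const_mul b)
  have hmean : ∑ i ∈ s, ∫ ω, (a * X i ω - b * Y i ω) ∂P ≤ C := by
    rw [← integral_finsetSum s hXY]
    simpa using integral_mono_ae (integrable_finsetSum s hXY) (integrable_const C) hle
  have hsplit : ∑ i ∈ s, ∫ ω, (a * X i ω - b * Y i ω) ∂P =
      a * ∑ i ∈ s, ∫ ω, X i ω ∂P - b * ∑ i ∈ s, ∫ ω, Y i ω ∂P := by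
    rw [Finset.mul_sum, Finset.mul_sum, ← Finset.sum_sub_distrib]
    refine Finset.sum_congr rfl fun i hi => ?_
    rw [integral_sub ((hX i hi).const_mul a) ((hY i hi).const_mul b), integral_const_mul,
      integral_const_mul]
  have hYs : ∑ i ∈ s, ∫ ω, Y i ω ∂P ≤ s.card * v := by
    simpa using Finset.sum_le_card_nsmul s _ v hYv
  linarith [mul_le_mul_of_nonneg_left hYs hb]

theorem stmt_6_general {E : Type*} [NormedAddCommGroup E] [InnerProductSpace ℝ E]
    [FiniteDimensional ℝ E]
    {Ω : Type*} [MeasurableSpace Ω] (P : Measure Ω) [IsProbabilityMeasure P]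
    (S : Set E) (hS : Convex ℝ S)
    (h : E → ℝ) (D : E → E → ℝ)
    (f : E → ℝ) (L : ℝ) (hL : 0 < L)
    (hf : Differentiable ℝ f)
    (hlip : ∀ x y : E, ‖gradient f x - gradient f y‖ ≤ L * ‖x - y‖)
    (hconv : ConvexOn ℝ S h)
    (α c σ M : ℝ) (hα : 0 < α) (hc : 1 / (2 * α) < c)
    (t : ℕ) (ht : 1 ≤ t)
    (αs : ℝ) (hαs : αs = α - 1 / (2 * c))
    (β : ℝ) (hβ : β = αs / L)
    (lam0 : E) (hlam0S : lam0 ∈ S)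
    (lam : ℕ → Ω → E) (g : ℕ → Ω → E)
    (hlam0 : ∀ ω, lam 0 ω = lam0)
    (hae : ∀ᵐ ω ∂P, ∀ k < t,
      lam (k + 1) ω ∈ S ∧
      (∀ y ∈ S,
        ⟪lam (k + 1) ω, g k ω⟫ + h (lam (k + 1) ω) +
            (1 / β) * D (lam (k + 1) ω) (lam k ω) ≤
          ⟪y, g k ω⟫ + h y + (1 / β) * D y (lam k ω)) ∧
      DifferentiableAt ℝ h (lam (k + 1) ω) ∧
      DifferentiableAt ℝ (fun x => D x (lam k ω)) (lam (k + 1) ω) ∧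
      ⟪lam (k + 1) ω - lam k ω, gradient (fun x => D x (lam k ω)) (lam (k + 1) ω)⟫ ≥
        α * ‖lam (k + 1) ω - lam k ω‖ ^ 2)
    (hδint : ∀ k < t, Integrable (fun ω => ‖g k ω - gradient f (lam k ω)‖ ^ 2) P)
    (hGint : ∀ k < t,
      Integrable (fun ω => ‖(1 / β) • (lam k ω - lam (k + 1) ω)‖ ^ 2) P)
    (hδvar : ∀ k < t, ∫ ω, ‖g k ω - gradient f (lam k ω)‖ ^ 2 ∂P ≤ σ ^ 2 / M)
    (Lstar : ℝ) (hLstar : ∀ x ∈ S, -(f x + h x) ≤ Lstar) :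
    (1 / (t : ℝ)) * ∑ k ∈ Finset.range t,
        (∫ ω, ‖(1 / β) • (lam k ω - lam (k + 1) ω)‖ ^ 2 ∂P) ≤
      2 * L * (Lstar + f lam0 + h lam0) / (αs ^ 2 * t) + c * σ ^ 2 / (M * αs) := by
  have hc0 : 0 < c := (by positivity : 0 < 1 / (2 * α)).trans hc
  have hαs0 : 0 < αs := by
    rw [hαs, sub_pos, div_lt_iff₀ (by positivity)]
    rw [div_lt_iff₀ (by positivity)] at hc
    linarith
  have hβ0 : 0 < β := hβ ▸ div_pos hαs0 hL
  have hcoef : ∀ v : E, ((α - 1 / (2 * c)) / β - L / 2) * ‖v‖ ^ 2 =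
      L * β ^ 2 / 2 * ‖(1 / β) • -v‖ ^ 2 := fun v => by
    rw [← hαs, hβ, norm_smul, norm_neg, Real.norm_of_nonneg (by positivity)]
    field_simp
    ring
  have hpath : ∀ᵐ ω ∂P, ∑ k ∈ Finset.range t,
      (L * β ^ 2 / 2 * ‖(1 / β) • (lam k ω - lam (k + 1) ω)‖ ^ 2 -
        β * c / 2 * ‖g k ω - gradient f (lam k ω)‖ ^ 2) ≤ Lstar + f lam0 + h lam0 := by
    filter_upwards [hae] with ω hω
    simpa only [hcoef, neg_sub, hlam0] using
      sum_proximal_step_descent_le (x := fun k => lam k ω) (g := fun k => g k ω)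
        hS hconv hf hlip hβ0 hc0 hLstar (hlam0 ω ▸ hlam0S) (fun k hk => (hω k hk).1)
        (fun k hk => (hω k hk).2.1) (fun k hk => (hω k hk).2.2.2.1)
        (fun k hk => (hω k hk).2.2.2.2)
  have hexp := mul_sum_integral_le_of_ae_sum_le (by positivity)
    (fun k hk => hGint k (Finset.mem_range.mp hk)) (fun k hk => hδint k (Finset.mem_range.mp hk))
    (fun k hk => hδvar k (Finset.mem_range.mp hk)) hpath
  rw [Finset.card_range] at hexp
  have ht0 : (0 : ℝ) < t := by exact_mod_cast ht
  calc _ = 2 / (L * β ^ 2 * t) * (L * β ^ 2 / 2 *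
        ∑ k ∈ Finset.range t, ∫ ω, ‖(1 / β) • (lam k ω - lam (k + 1) ω)‖ ^ 2 ∂P) := by
        field_simp
    _ ≤ 2 / (L * β ^ 2 * t) * (Lstar + f lam0 + h lam0 + β * c / 2 * (t * (σ ^ 2 / M))) := by
        gcongr
    _ = _ := by
        rw [hβ]
        field_simp

/-- Proposition 3: convergence of stochastic proximal-gradient variational inference
with fixed step size `β := α*/L` (where `α* := α − 1/(2c)`) and fixed batch size `M`:
`(1/t)·Σ_{k<t} E[‖G_k‖²] ≤ 2LC₀/(α*²t) + cσ²/(Mα*)`, where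
`G_k := (λ_k − λ_{k+1})/β`, `δ_k := g_k − ∇f(λ_k)` with `E[‖δ_k‖²] ≤ σ²/M`,
and `C₀ := 𝓛* + f(λ₀) + h(λ₀)`. -/
theorem stmt_6 {E : Type*} [NormedAddCommGroup E] [InnerProductSpace ℝ E]
    [FiniteDimensional ℝ E] [MeasurableSpace E] [BorelSpace E]
    {Ω : Type*} [MeasurableSpace Ω] (P : Measure Ω) [IsProbabilityMeasure P]
    (S : Set E) (hS : Convex ℝ S)
    (h : E → ℝ) (D : E → E → ℝ)
    (f : E → ℝ) (L : ℝ) (hL : 0 < L)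
    (hf : Differentiable ℝ f)
    (hlip : ∀ x y : E, ‖gradient f x - gradient f y‖ ≤ L * ‖x - y‖)
    (hconv : ConvexOn ℝ S h)
    (α c σ M : ℝ) (hα : 0 < α) (hc : 1 / (2 * α) < c) (hσ : 0 ≤ σ) (hM : 0 < M)
    (t : ℕ) (ht : 1 ≤ t)
    (αs : ℝ) (hαs : αs = α - 1 / (2 * c))
    (β : ℝ) (hβ : β = αs / L)
    (lam0 : E) (hlam0S : lam0 ∈ S)
    (lam : ℕ → Ω → E) (g : ℕ → Ω → E)
    (hlam0 : ∀ ω, lam 0 ω = lam0)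
    (hmeas_lam : ∀ k, Measurable (lam k))
    (hmeas_g : ∀ k < t, Measurable (g k))
    (hae : ∀ᵐ ω ∂P, ∀ k < t,
      lam (k + 1) ω ∈ S ∧
      (∀ y ∈ S,
        ⟪lam (k + 1) ω, g k ω⟫ + h (lam (k + 1) ω) +
            (1 / β) * D (lam (k + 1) ω) (lam k ω) ≤
          ⟪y, g k ω⟫ + h y + (1 / β) * D y (lam k ω)) ∧
      DifferentiableAt ℝ h (lam (k + 1) ω) ∧
      DifferentiableAt ℝ (fun x => D x (lam k ω)) (lam (k + 1) ω) ∧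
      ⟪lam (k + 1) ω - lam k ω, gradient (fun x => D x (lam k ω)) (lam (k + 1) ω)⟫ ≥
        α * ‖lam (k + 1) ω - lam k ω‖ ^ 2)
    (hδint : ∀ k < t, Integrable (fun ω => ‖g k ω - gradient f (lam k ω)‖ ^ 2) P)
    (hGint : ∀ k < t,
      Integrable (fun ω => ‖(1 / β) • (lam k ω - lam (k + 1) ω)‖ ^ 2) P)
    (hδvar : ∀ k < t, ∫ ω, ‖g k ω - gradient f (lam k ω)‖ ^ 2 ∂P ≤ σ ^ 2 / M)
    (Lstar : ℝ) (hLstar : ∀ x ∈ S, -(f x + h x) ≤ Lstar) :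
    (1 / (t : ℝ)) * ∑ k ∈ Finset.range t,
        (∫ ω, ‖(1 / β) • (lam k ω - lam (k + 1) ω)‖ ^ 2 ∂P) ≤
      2 * L * (Lstar + f lam0 + h lam0) / (αs ^ 2 * t) + c * σ ^ 2 / (M * αs) :=
  stmt_6_general P S hS h D f L hL hf hlip hconv α c σ M hα hc t ht αs hαs β hβ lam0 hlam0S lam g
    hlam0 hae hδint hGint hδvar Lstar hLstar
end

section
/- Let E be a real Hilbert space, α > 0, and let A : E → ℝ be twice continuously differentiable with A''(λ)(v, v) ≥ α·‖v‖² for all λ, v ∈ E. Define the symmetric divergence D_sym(λ, λ') := ⟨∇A(λ) − ∇A(λ'), λ − λ'⟩ (which equals the sum of the Bregman divergence A(λ) − A(λ') − ⟨∇A(λ'), λ − λ'⟩ and the reversed divergence A(λ') − A(λ) − ⟨∇A(λ), λ' − λ⟩). Then for all λ, λ' ∈ E, the gradient of D_sym in its first argument satisfies ⟨λ − λ', ∇₁D_sym(λ, λ')⟩ ≥ 2α·‖λ − λ'‖²; that is, the symmetric divergence satisfies assumption A6 with constant 2α. -/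
open scoped RealInnerProductSpace

/-!
Along the segment `t ↦ y + t (x - y)` the function `t ↦ A'(y + t (x - y)) (x - y)` has derivative
`A''(·)(x - y, x - y) ≥ α‖x - y‖²`, so by the mean value theorem the symmetric divergence
`A'(x)(x - y) - A'(y)(x - y)` is at least `α‖x - y‖²`. Differentiating it in `x` along `x - y`
gives `A''(x)(x - y, x - y)` plus the divergence itself, hence the bound `2α‖x - y‖²`.
-/

section NormedSpace

variable {E : Type*} [NormedAddCommGroup E] [NormedSpace ℝ E]

/-- The symmetric divergence `⟨∇A(x) − ∇A(y), x − y⟩`, written with Fréchet derivatives. -/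
noncomputable def symmDivergence (A : E → ℝ) (x y : E) : ℝ :=
  fderiv ℝ A x (x - y) - fderiv ℝ A y (x - y)

theorem mul_norm_sq_le_symmDivergence {A : E → ℝ} {α : ℝ} (hA : ContDiff ℝ 2 A)
    (hcoer : ∀ x v : E, fderiv ℝ (fderiv ℝ A) x v v ≥ α * ‖v‖ ^ 2) (x y : E) :
    α * ‖x - y‖ ^ 2 ≤ symmDivergence A x y := by
  set w := x - y
  have hA' : Differentiable ℝ (fderiv ℝ A) :=
    (hA.fderiv_right (by norm_num)).differentiable one_ne_zero
  have hderiv : ∀ t : ℝ, HasDerivAt (fun t : ℝ => fderiv ℝ A (y + t • w) w)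
      (fderiv ℝ (fderiv ℝ A) (y + t • w) w w) t := by
    intro t
    have hline : HasDerivAt (fun t : ℝ => y + t • w) w t := by
      simpa using ((hasDerivAt_id t).smul_const w).const_add y
    exact (ContinuousLinearMap.apply ℝ ℝ w).hasFDerivAt.comp_hasDerivAt t
      ((hA' _).hasFDerivAt.comp_hasDerivAt t hline)
  obtain ⟨c, -, hc⟩ := exists_hasDerivAt_eq_slope _ _ zero_lt_one
    (fun t _ => (hderiv t).continuousAt.continuousWithinAt) (fun t _ => hderiv t)
  have hend : y + (1 : ℝ) • w = x := by simp [w]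
  simp only [hend, zero_smul, add_zero, sub_zero, div_one] at hc
  exact (hcoer _ w).trans_eq hc

theorem fderiv_symmDivergence_apply {A : E → ℝ} {x : E} (hA : DifferentiableAt ℝ (fderiv ℝ A) x)
    (y v : E) :
    fderiv ℝ (fun μ => symmDivergence A μ y) x v =
      fderiv ℝ (fderiv ℝ A) x v (x - y) + (fderiv ℝ A x v - fderiv ℝ A y v) := by
  have hsub : HasFDerivAt (fun μ : E => μ - y) (ContinuousLinearMap.id ℝ E) x :=
    (hasFDerivAt_id x).sub_const y
  have h : HasFDerivAt (fun μ => symmDivergence A μ y) _ x :=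
    (hA.hasFDerivAt.clm_apply hsub).sub ((fderiv ℝ A y).hasFDerivAt.comp x hsub)
  rw [h.fderiv]
  simp only [sub_apply, add_apply, ContinuousLinearMap.comp_apply, ContinuousLinearMap.flip_apply, ContinuousLinearMap.id_apply]
  ring

end NormedSpace

theorem inner_gradient_sub_gradient {E : Type*} [NormedAddCommGroup E] [InnerProductSpace ℝ E]
    [CompleteSpace E] (A : E → ℝ) (x y : E) :
    ⟪gradient A x - gradient A y, x - y⟫ = symmDivergence A x y := by
  rw [inner_sub_left, inner_gradient_left, inner_gradient_left, symmDivergence]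

theorem stmt_9_general {E : Type*} [NormedAddCommGroup E] [InnerProductSpace ℝ E] [CompleteSpace E]
    (α : ℝ) (A : E → ℝ) (hA : ContDiff ℝ 2 A)
    (hcoer : ∀ lam v : E, fderiv ℝ (fderiv ℝ A) lam v v ≥ α * ‖v‖ ^ 2) :
    ∀ lam lam' : E,
      ⟪lam - lam',
          gradient (fun μ => ⟪gradient A μ - gradient A lam', μ - lam'⟫) lam⟫ ≥
        2 * α * ‖lam - lam'‖ ^ 2 := by
  intro lam lam'
  have hA' : DifferentiableAt ℝ (fderiv ℝ A) lam :=
    (hA.fderiv_right (by norm_num)).differentiable one_ne_zero lam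
  simp only [inner_gradient_sub_gradient, inner_gradient_right, conj_trivial]
  rw [fderiv_symmDivergence_apply hA']
  have hdiv := mul_norm_sq_le_symmDivergence hA hcoer lam lam'
  have hsecond := hcoer lam (lam - lam')
  rw [symmDivergence] at hdiv
  linarith

/-- The symmetric divergence `D_sym(λ, λ') := ⟨∇A(λ) − ∇A(λ'), λ − λ'⟩` of a twice
continuously differentiable `A` with `A''(λ)(v, v) ≥ α‖v‖²` everywhere satisfies
`⟨λ − λ', ∇₁D_sym(λ, λ')⟩ ≥ 2α‖λ − λ'‖²`, i.e. assumption A6 with constant `2α`. -/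
theorem stmt_9 {E : Type*} [NormedAddCommGroup E] [InnerProductSpace ℝ E] [CompleteSpace E]
    (α : ℝ) (hα : 0 < α) (A : E → ℝ) (hA : ContDiff ℝ 2 A)
    (hcoer : ∀ lam v : E, fderiv ℝ (fderiv ℝ A) lam v v ≥ α * ‖v‖ ^ 2) :
    ∀ lam lam' : E,
      ⟪lam - lam',
          gradient (fun μ => ⟪gradient A μ - gradient A lam', μ - lam'⟫) lam⟫ ≥
        2 * α * ‖lam - lam'‖ ^ 2 :=
  stmt_9_general α A hA hcoer
end

section
/- Let n ≥ 1, let K and V be real positive-definite n×n matrices, let β > 0, set r := 1/(1 + β), and let m ∈ ℝⁿ, a ∈ ℝ, and e_j be the j-th standard basis vector of ℝⁿ. Then the matrices K⁻¹ + (1/β)·V⁻¹ and (1 − r)·K⁻¹ + r·V⁻¹ are invertible, and (K⁻¹ + (1/β)·V⁻¹)⁻¹·((1/β)·V⁻¹·m − a·e_j) = m − (1 − r)·((1 − r)·K⁻¹ + r·V⁻¹)⁻¹·(K⁻¹·m + a·e_j). -/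
/-! With `A := K⁻¹ + (1/β)·V⁻¹`, the choice `r = 1/(1+β)` gives `(1 − r)/β = r`, so
`(1 − r)·K⁻¹ + r·V⁻¹ = (1 − r)·A` and the right-hand side is `m − A⁻¹(K⁻¹m + a·e_j)`.
Writing `(1/β)·V⁻¹m − a·e_j = A m − (K⁻¹m + a·e_j)` and applying `A⁻¹` gives the same
vector. Invertibility follows because `A` and `(1 − r)·A` are positive definite. -/

namespace Matrix

variable {ι : Type*} [Fintype ι] [DecidableEq ι]

theorem inv_mulVec_mulVec_sub {R : Type*} [CommRing R] {A : Matrix ι ι R} (hA : IsUnit A)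
    (x y : ι → R) : A⁻¹ *ᵥ (A *ᵥ x - y) = x - A⁻¹ *ᵥ y := by
  rw [mulVec_sub, mulVec_mulVec, nonsing_inv_mul A ((isUnit_iff_isUnit_det A).1 hA),
    one_mulVec]

theorem smul_smul_inv_mulVec {K : Type*} [Field K] {A : Matrix ι ι K} (hA : IsUnit A)
    {c : K} (hc : c ≠ 0) (y : ι → K) : c • ((c • A)⁻¹ *ᵥ y) = A⁻¹ *ᵥ y := by
  have := invertibleOfNonzero hc
  rw [inv_smul A c ((isUnit_iff_isUnit_det A).1 hA), smul_mulVec, smul_smul, invOf_eq_inv,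
    mul_inv_cancel₀ hc, one_smul]

end Matrix

theorem stmt_12_general (n : ℕ) (K V : Matrix (Fin n) (Fin n) ℝ)
    (hK : K.PosDef) (hV : V.PosDef) (β : ℝ) (hβ : 0 < β)
    (r : ℝ) (hr : r = 1 / (1 + β))
    (m : Fin n → ℝ) (a : ℝ) (j : Fin n) :
    IsUnit (K⁻¹ + (1 / β) • V⁻¹) ∧
    IsUnit ((1 - r) • K⁻¹ + r • V⁻¹) ∧
    (K⁻¹ + (1 / β) • V⁻¹)⁻¹.mulVec
        ((1 / β) • V⁻¹.mulVec m - a • (Pi.single j 1 : Fin n → ℝ)) =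
      m - (1 - r) • ((1 - r) • K⁻¹ + r • V⁻¹)⁻¹.mulVec
        (K⁻¹.mulVec m + a • (Pi.single j 1 : Fin n → ℝ)) := by
  have h1r : 0 < 1 - r := by
    rw [hr, sub_pos, div_lt_one (by linarith)]
    linarith
  have hscalar : (1 - r) * (1 / β) = r := by
    rw [hr]
    field_simp
    ring
  have hA : (K⁻¹ + (1 / β) • V⁻¹).PosDef := hK.inv.add (hV.inv.smul (by positivity))
  have hB : (1 - r) • (K⁻¹ + (1 / β) • V⁻¹) = (1 - r) • K⁻¹ + r • V⁻¹ := by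
    rw [smul_add, smul_smul, hscalar]
  refine ⟨hA.isUnit, hB ▸ (hA.smul h1r).isUnit, ?_⟩
  have hsplit : (1 / β) • V⁻¹.mulVec m - a • Pi.single j 1 =
      (K⁻¹ + (1 / β) • V⁻¹).mulVec m - (K⁻¹.mulVec m + a • Pi.single j 1) := by
    rw [Matrix.add_mulVec, Matrix.smul_mulVec]
    abel
  rw [← hB, Matrix.smul_smul_inv_mulVec hA.isUnit h1r.ne', hsplit,
    Matrix.inv_mulVec_mulVec_sub hA.isUnit]

/-- Incremental form of the proximal-gradient SVI mean update: for positive-definite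
`K`, `V`, step size `β > 0` and `r := 1/(1+β)`, the matrices `K⁻¹ + (1/β)·V⁻¹` and
`(1−r)·K⁻¹ + r·V⁻¹` are invertible, and
`(K⁻¹ + (1/β)·V⁻¹)⁻¹((1/β)·V⁻¹m − a·e_j)
  = m − (1−r)·((1−r)·K⁻¹ + r·V⁻¹)⁻¹(K⁻¹m + a·e_j)`. -/
theorem stmt_12 (n : ℕ) (hn : 1 ≤ n) (K V : Matrix (Fin n) (Fin n) ℝ)
    (hK : K.PosDef) (hV : V.PosDef) (β : ℝ) (hβ : 0 < β)
    (r : ℝ) (hr : r = 1 / (1 + β))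
    (m : Fin n → ℝ) (a : ℝ) (j : Fin n) :
    IsUnit (K⁻¹ + (1 / β) • V⁻¹) ∧
    IsUnit ((1 - r) • K⁻¹ + r • V⁻¹) ∧
    (K⁻¹ + (1 / β) • V⁻¹)⁻¹.mulVec
        ((1 / β) • V⁻¹.mulVec m - a • (Pi.single j 1 : Fin n → ℝ)) =
      m - (1 - r) • ((1 - r) • K⁻¹ + r • V⁻¹)⁻¹.mulVec
        (K⁻¹.mulVec m + a • (Pi.single j 1 : Fin n → ℝ)) :=
  stmt_12_general n K V hK hV β hβ r hr m a j
end

section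
/- Let n ≥ 1, let K be an invertible real n×n matrix, let W₀ be any real n×n matrix, and let r : ℕ → ℝ, γ : ℕ → ℝ, and j : ℕ → {1, …, n} be sequences. Define W_{k+1} := r_k·W_k + (1 − r_k)·(K⁻¹ + γ_k·E_{j_k}) for k ≥ 0, where E_i := diag(e_i) is the diagonal matrix whose only nonzero entry is a 1 in position (i, i); and define u : ℕ → ℝⁿ by u₀ := 0 and u_{k+1} := r_k·u_k + (1 − r_k)·γ_k·e_{j_k}. Then for every k ≥ 0, W_k = t_k·W₀ + (1 − t_k)·K⁻¹ + diag(u_k), where t_k := Π_{i<k} r_i. In particular, if W₀ = K⁻¹ then W_k = K⁻¹ + diag(u_k) for all k. -/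
/-- Unrolling the precision recursion
`W_{k+1} = r_k·W_k + (1−r_k)·(K⁻¹ + γ_k·E_{j_k})` of proximal-gradient SVI:
with `u₀ = 0`, `u_{k+1} = r_k·u_k + (1−r_k)·γ_k·e_{j_k}` and `t_k := Π_{i<k} r_i`,
one has `W_k = t_k·W₀ + (1 − t_k)·K⁻¹ + diag(u_k)`; in particular, if `W₀ = K⁻¹`
then `W_k = K⁻¹ + diag(u_k)` for all `k`. -/
theorem stmt_14 (n : ℕ) (hn : 1 ≤ n) (K : Matrix (Fin n) (Fin n) ℝ) (hK : IsUnit K)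
    (W : ℕ → Matrix (Fin n) (Fin n) ℝ) (r γ : ℕ → ℝ) (j : ℕ → Fin n)
    (hW : ∀ k, W (k + 1) = r k • W k +
      (1 - r k) • (K⁻¹ + γ k • Matrix.diagonal (Pi.single (j k) 1 : Fin n → ℝ)))
    (u : ℕ → Fin n → ℝ) (hu0 : u 0 = 0)
    (hu : ∀ k, u (k + 1) = r k • u k +
      ((1 - r k) * γ k) • (Pi.single (j k) 1 : Fin n → ℝ)) :
    (∀ k, W k = (∏ i ∈ Finset.range k, r i) • W 0 +
        (1 - ∏ i ∈ Finset.range k, r i) • K⁻¹ + Matrix.diagonal (u k)) ∧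
    (W 0 = K⁻¹ → ∀ k, W k = K⁻¹ + Matrix.diagonal (u k)) := by
  have main : ∀ k, W k = (∏ i ∈ Finset.range k, r i) • W 0 +
      (1 - ∏ i ∈ Finset.range k, r i) • K⁻¹ + Matrix.diagonal (u k) := by
    intro k
    induction k with
    | zero => rw [hu0]; simp
    | succ k ih =>
      rw [hW k, ih, Finset.prod_range_succ]
      have hdiag : Matrix.diagonal (u (k + 1)) = r k • Matrix.diagonal (u k) +
          ((1 - r k) * γ k) • Matrix.diagonal (Pi.single (j k) 1 : Fin n → ℝ) := by
        rw [hu k]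
        ext i l
        rcases eq_or_ne i l with h | h <;>
          simp [Matrix.diagonal_apply, h]
      rw [hdiag]
      module
  refine ⟨main, fun h0 k => ?_⟩
  rw [main k, h0]
  module
end

section
/- Let D ≥ 1 and let K be a real positive-definite D×D matrix. Then the set 𝒮 := { (m, V) : m ∈ ℝ^D, V a real D×D positive-definite matrix } is convex, and the function h(m, V) := ½·( −log(det V) + log(det K) + trace(K⁻¹·V) + mᵀ·K⁻¹·m − D ) is convex on 𝒮. (This function equals the Kullback–Leibler divergence from N(m, V) to N(0, K).) -/
/-!
The trace term and the constants are affine in `(m, V)`, and `mᵀ K⁻¹ m` is a positive semidefinite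
quadratic form in `m`, so everything reduces to the concavity of `log det` on positive definite
matrices. Writing `B = A^{1/2} M A^{1/2}`, one has `a A + b B = A^{1/2} (a + b M) A^{1/2}`, and the
inequality becomes `b log det M ≤ log det (a + b M)`, which holds eigenvalue by eigenvalue by
concavity of `log` on `(0, ∞)`.
-/

open Matrix CFC
open scoped MatrixOrder

namespace Matrix

variable {n : Type*}

theorem convex_setOf_posDef : Convex ℝ {A : Matrix n n ℝ | A.PosDef} := by
  intro A hA B hB a b ha hb hab
  rcases ha.eq_or_lt with rfl | ha
  · obtain rfl : b = 1 := by linarith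
    simpa using hB
  exact (hA.smul ha).add_posSemidef (hB.posSemidef.smul hb)

variable [Fintype n]

theorem PosSemidef.convexOn_dotProduct_mulVec {Q : Matrix n n ℝ} (hQ : Q.PosSemidef) :
    ConvexOn ℝ Set.univ fun x => x ⬝ᵥ Q *ᵥ x := by
  refine ⟨convex_univ, fun x _ y _ a b ha hb hab => ?_⟩
  have hxy : 0 ≤ (x - y) ⬝ᵥ Q *ᵥ (x - y) := by
    simpa using hQ.dotProduct_mulVec_nonneg (x - y)
  obtain rfl : b = 1 - a := by linarith
  simp only [mulVec_add, mulVec_smul, mulVec_sub, dotProduct_add, add_dotProduct,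
    dotProduct_smul, smul_dotProduct, dotProduct_sub, sub_dotProduct, smul_eq_mul] at hxy ⊢
  nlinarith [mul_nonneg (mul_nonneg ha hb) hxy]

variable [DecidableEq n]

theorem IsHermitian.det_cfc {𝕜 : Type*} [RCLike 𝕜] {A : Matrix n n 𝕜} (hA : A.IsHermitian)
    (f : ℝ → ℝ) : (cfc f A).det = ∏ i, (f (hA.eigenvalues i) : 𝕜) := by
  rw [hA.cfc_eq]
  simp [IsHermitian.cfc, -Unitary.conjStarAlgAut_apply]

theorem PosDef.mul_log_det_le_log_det_smul_one_add_smul {M : Matrix n n ℝ} (hM : M.PosDef)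
    {a b : ℝ} (ha : 0 ≤ a) (hb : 0 ≤ b) (hab : a + b = 1) :
    b * Real.log M.det ≤ Real.log (a • 1 + b • M).det := by
  have hcfc : a • 1 + b • M = cfc (fun x => a + b * x) M := by
    rw [cfc_const_add a (fun x => b * x) M, cfc_const_mul_id b M, Algebra.algebraMap_eq_smul_one]
  have hpos (i : n) : 0 < a + b * hM.1.eigenvalues i := by
    simpa using (convex_Ioi (0 : ℝ)) (Set.mem_Ioi.2 one_pos)
      (Set.mem_Ioi.2 (hM.eigenvalues_pos i)) ha hb hab
  rw [hcfc, hM.1.det_cfc, hM.1.det_eq_prod_eigenvalues]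
  simp only [RCLike.ofReal_real_eq_id, id]
  rw [Real.log_prod fun i _ => (hpos i).ne', Real.log_prod fun i _ => (hM.eigenvalues_pos i).ne',
    Finset.mul_sum]
  refine Finset.sum_le_sum fun i _ => ?_
  simpa using strictConcaveOn_log_Ioi.concaveOn.2 (Set.mem_Ioi.2 one_pos)
    (Set.mem_Ioi.2 (hM.eigenvalues_pos i)) ha hb hab

theorem det_conjSqrt {A : Matrix n n ℝ} (hA : A.PosSemidef) (X : Matrix n n ℝ) :
    (conjSqrt A X).det = A.det * X.det := by
  rw [conjSqrt_apply, det_mul, det_mul, hA.det_sqrt, RCLike.sqrt_of_nonneg hA.det_nonneg,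
    RCLike.re_to_real, RCLike.ofReal_real_eq_id, id, mul_right_comm,
    Real.mul_self_sqrt hA.det_nonneg]

theorem concaveOn_log_det : ConcaveOn ℝ {A : Matrix n n ℝ | A.PosDef} fun A => Real.log A.det := by
  refine ⟨convex_setOf_posDef, fun A (hA : A.PosDef) B (hB : B.PosDef) a b ha hb hab => ?_⟩
  set M := conjSqrt (Ring.inverse A) B
  have hM : M.PosDef := by
    rw [← isStrictlyPositive_iff_posDef,
      isStrictlyPositive_conjSqrt_iff _ _ hA.isStrictlyPositive.ringInverse]
    exact hB.isStrictlyPositive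
  have hcomb : a • A + b • B = conjSqrt A (a • 1 + b • M) := by
    rw [map_add, map_smul, map_smul, conjSqrt_one A, conjSqrt_conjSqrt_ringInverse A B]
  have hB_eq : B = conjSqrt A M := (conjSqrt_conjSqrt_ringInverse A B).symm
  have hlog_conjSqrt (X : Matrix n n ℝ) (hX : X.PosDef) :
      Real.log (conjSqrt A X).det = Real.log A.det + Real.log X.det := by
    rw [det_conjSqrt hA.posSemidef, Real.log_mul hA.det_pos.ne' hX.det_pos.ne']
  have hmix := hM.mul_log_det_le_log_det_smul_one_add_smul ha hb hab
  have hmix_pos : (a • 1 + b • M).PosDef := convex_setOf_posDef PosDef.one hM ha hb hab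
  simp only [smul_eq_mul]
  rw [hcomb, hlog_conjSqrt _ hmix_pos, hB_eq, hlog_conjSqrt _ hM]
  obtain rfl : a = 1 - b := by linarith
  linarith

end Matrix

theorem stmt_15_general (D : ℕ) (K : Matrix (Fin D) (Fin D) ℝ) (hK : K.PosDef) :
    Convex ℝ {p : (Fin D → ℝ) × Matrix (Fin D) (Fin D) ℝ | p.2.PosDef} ∧
    ConvexOn ℝ {p : (Fin D → ℝ) × Matrix (Fin D) (Fin D) ℝ | p.2.PosDef}
      (fun p => (1 / 2) * (-Real.log p.2.det + Real.log K.det +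
        (K⁻¹ * p.2).trace + dotProduct p.1 (K⁻¹.mulVec p.1) - D)) := by
  set S := {p : (Fin D → ℝ) × Matrix (Fin D) (Fin D) ℝ | p.2.PosDef}
  let fst := LinearMap.fst ℝ (Fin D → ℝ) (Matrix (Fin D) (Fin D) ℝ)
  let snd := LinearMap.snd ℝ (Fin D → ℝ) (Matrix (Fin D) (Fin D) ℝ)
  have hS : Convex ℝ S := convex_setOf_posDef.linear_preimage snd
  have hlogdet : ConvexOn ℝ S fun p => -Real.log p.2.det :=
    (concaveOn_log_det.comp_linearMap snd).neg
  have htrace : ConvexOn ℝ S fun p => (K⁻¹ * p.2).trace :=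
    (traceLinearMap _ ℝ ℝ ∘ₗ LinearMap.mulLeft ℝ K⁻¹ ∘ₗ snd).convexOn hS
  have hquad : ConvexOn ℝ S fun p => p.1 ⬝ᵥ K⁻¹ *ᵥ p.1 :=
    (hK.inv.posSemidef.convexOn_dotProduct_mulVec.comp_linearMap fst).subset
      (Set.subset_univ _) hS
  exact ⟨hS, ((((hlogdet.add_const _).add htrace).add hquad).sub
    (concaveOn_const _ hS)).smul (by norm_num)⟩

/-- The set of pairs `(m, V)` with `V` positive definite is convex, and the
Kullback–Leibler divergence from `N(m, V)` to `N(0, K)`,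
`h(m, V) = ½(−log det V + log det K + trace(K⁻¹V) + mᵀK⁻¹m − D)`,
is (jointly) convex on it. -/
theorem stmt_15 (D : ℕ) (hD : 1 ≤ D) (K : Matrix (Fin D) (Fin D) ℝ) (hK : K.PosDef) :
    Convex ℝ {p : (Fin D → ℝ) × Matrix (Fin D) (Fin D) ℝ | p.2.PosDef} ∧
    ConvexOn ℝ {p : (Fin D → ℝ) × Matrix (Fin D) (Fin D) ℝ | p.2.PosDef}
      (fun p => (1 / 2) * (-Real.log p.2.det + Real.log K.det +
        (K⁻¹ * p.2).trace + dotProduct p.1 (K⁻¹.mulVec p.1) - D)) :=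
  stmt_15_general D K hK
end
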